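/- arXiv:2505.04117 — 4 statements merged into one kernel-verified Lean document; each statement's English description precedes it below -/
import Mathlib

section
/- Let G be an abelian topological group and let N denote the closure of {0} in G. Then G is homeomorphic, as a topological space, to the product (G/N) × N, where G/N carries the quotient topology, N the subspace topology, and the product the product topology. -/
/-- Let `G` be an abelian topological group and let `N` denote the closure of
`{0}` in `G` (a closed subgroup, realized as the topological closure of the trivial subgroup).
Then `G` is homeomorphic, as a topological space, to the product `(G / N) × N`, where `G / N`
carries the quotient topology, `N` the subspace topology, and the product the product topology. -/
theorem closure_zero_splits_topologically
    {G : Type*} [AddCommGroup G] [TopologicalSpace G] [IsTopologicalAddGroup G] :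
    Nonempty
      (G ≃ₜ (G ⧸ (⊥ : AddSubgroup G).topologicalClosure) ×
        ↥((⊥ : AddSubgroup G).topologicalClosure)) := by
  set N := (⊥ : AddSubgroup G).topologicalClosure with hNdef
  -- membership in N is membership in closure {0}
  have hmemN : ∀ n : G, n ∈ N → n ∈ closure ({0} : Set G) := by
    intro n hn
    simpa [hNdef, AddSubgroup.topologicalClosure] using hn
  -- every open set is saturated by N-cosets
  have key : ∀ (U : Set G), IsOpen U → ∀ x ∈ U, ∀ n ∈ N, x + n ∈ U := by
    intro U hU x hx n hn
    have hmn : (-n) ∈ closure ({0} : Set G) := hmemN _ (neg_mem hn)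
    have hx' : x ∈ closure ({x + n} : Set G) := by
      have hmaps : Set.MapsTo (fun y => (x + n) + y) ({0} : Set G) ({x + n} : Set G) := by
        intro y hy
        simp only [Set.mem_singleton_iff] at hy
        simp [hy]
      have := map_mem_closure (continuous_const.add continuous_id) hmn hmaps
      simpa using this
    rcases mem_closure_iff.mp hx' U hU hx with ⟨z, hzU, hz⟩
    simp only [Set.mem_singleton_iff] at hz
    subst hz; exact hzU
  -- the subspace topology on N is indiscrete
  have indis : ∀ V : Set N, IsOpen V → V = ∅ ∨ V = Set.univ := by
    intro V hV
    rcases isOpen_induced_iff.mp hV with ⟨W, hW, rfl⟩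
    rcases Set.eq_empty_or_nonempty (Subtype.val ⁻¹' W : Set N) with h | ⟨⟨m, hm⟩, hmW⟩
    · exact Or.inl h
    · right
      ext ⟨n, hn⟩
      simp only [Set.mem_preimage, Set.mem_univ, iff_true]
      have : m + (n - m) ∈ W := key W hW m hmW (n - m) (sub_mem hn hm)
      simpa using this
  -- the quotient map and a section
  have hsub : ∀ g : G, g - (QuotientAddGroup.mk g : G ⧸ N).out ∈ N := by
    intro g
    exact (QuotientAddGroup.eq_iff_sub_mem).mp (QuotientAddGroup.out_eq' _).symm
  refine ⟨Homeomorph.mk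
    ⟨fun g => (QuotientAddGroup.mk g, ⟨g - (QuotientAddGroup.mk g : G ⧸ N).out, hsub g⟩),
     fun p => p.1.out + p.2.val, ?_, ?_⟩ ?_ ?_⟩
  · -- left inverse
    intro g
    simp only
    abel
  · -- right inverse
    rintro ⟨q, n, hn⟩
    have h1 : (QuotientAddGroup.mk (q.out + n) : G ⧸ N) = q := by
      have : (QuotientAddGroup.mk (q.out + n) : G ⧸ N) =
          QuotientAddGroup.mk q.out + QuotientAddGroup.mk n := rfl
      rw [this, (QuotientAddGroup.eq_zero_iff n).mpr hn, add_zero, QuotientAddGroup.out_eq']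
    refine Prod.ext h1 (Subtype.ext ?_)
    simp only [h1]
    abel
  · -- continuity of toFun
    refine Continuous.prodMk continuous_quotient_mk' ?_
    rw [continuous_def]
    intro V hV
    rcases indis V hV with rfl | rfl
    · simp
    · simp
  · -- continuity of invFun
    rw [continuous_def]
    intro U hU
    have hsat : ∀ x : G, ∀ n ∈ N, x + n ∈ U → x ∈ U := by
      intro x n hn hx
      have := key U hU (x + n) hx (-n) (neg_mem hn)
      simpa using this
    have heq : (fun p : (G ⧸ N) × N => p.1.out + p.2.val) ⁻¹' U =
        (QuotientAddGroup.mk '' U) ×ˢ (Set.univ : Set N) := by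
      ext ⟨q, n, hn⟩
      simp only [Set.mem_preimage, Set.mem_prod, Set.mem_univ, and_true, Set.mem_image]
      constructor
      · intro h
        exact ⟨q.out, hsat q.out n hn h, QuotientAddGroup.out_eq' q⟩
      · rintro ⟨u, hu, rfl⟩
        have hmem : (QuotientAddGroup.mk u : G ⧸ N).out - u ∈ N := hsub u |> fun _ => by
          have : (QuotientAddGroup.mk ((QuotientAddGroup.mk u : G ⧸ N).out) : G ⧸ N) =
              QuotientAddGroup.mk u := QuotientAddGroup.out_eq' _
          exact (QuotientAddGroup.eq_iff_sub_mem).mp this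
        have h1 : u + ((QuotientAddGroup.mk u : G ⧸ N).out - u) ∈ U := key U hU u hu _ hmem
        have h2 : u + ((QuotientAddGroup.mk u : G ⧸ N).out - u) + n ∈ U := key U hU _ h1 n hn
        have : u + ((QuotientAddGroup.mk u : G ⧸ N).out - u) + n =
            (QuotientAddGroup.mk u : G ⧸ N).out + n := by abel
        rwa [this] at h2
    rw [heq]
    exact ((QuotientAddGroup.isOpenMap_coe) U hU).prod isOpen_univ
end

section
/- Let (G_n, f_n) be an inverse sequence of abelian groups indexed by ℕ and define G_n° = ⋂_{m ≥ n} Im(f_{n,m} : G_m → G_n). Then each f_n maps G_{n+1}° into G_n°, so the G_n° form an inverse subsequence, and the inclusion maps induce an isomorphism of topological groups lim G_n° ≅ lim G_n (where both inverse limits carry the inverse limit topology coming from the discrete topologies). -/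
/-- The inverse limit of an inverse sequence of abelian groups `(G n, f n)`, as the
`AddSubgroup` of coherent sequences in the product group `∀ n, G n`.  Each `G n` is viewed
as a discrete topological group, and `invLim G f` carries the subspace topology from the
product topology. -/
def invLim (G : ℕ → Type*) [∀ n, AddCommGroup (G n)]
    (f : ∀ n, G (n + 1) →+ G n) : AddSubgroup (∀ n, G n) where
  carrier := {x | ∀ n, x n = f n (x (n + 1))}
  add_mem' := by
    intro a b ha hb n
    show a n + b n = f n (a (n + 1) + b (n + 1))
    rw [map_add, ← ha n, ← hb n]
  zero_mem' := by
    intro n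
    show (0 : G n) = f n 0
    rw [map_zero]
  neg_mem' := by
    intro a ha n
    show -(a n) = f n (-(a (n + 1)))
    rw [map_neg, ← ha n]

/-- The composite bonding map `f_{n,m} : G m →+ G n` for `n ≤ m`, namely
`f n ∘ f (n+1) ∘ ⋯ ∘ f (m-1)` (with `f_{n,n} = id`). -/
def fnm (G : ℕ → Type*) [∀ n, AddCommGroup (G n)] (f : ∀ n, G (n + 1) →+ G n)
    (n m : ℕ) (h : n ≤ m) : G m →+ G n :=
  Nat.leRecOn h (fun {k} (g : G k →+ G n) => g.comp (f k)) (AddMonoidHom.id (G n))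

/-- `G_n° = ⋂_{m ≥ n} Im (f_{n,m} : G m →+ G n)`, as an `AddSubgroup` of `G n`. -/
def Gcirc (G : ℕ → Type*) [∀ n, AddCommGroup (G n)] (f : ∀ n, G (n + 1) →+ G n)
    (n : ℕ) : AddSubgroup (G n) :=
  ⨅ (m : ℕ) (h : n ≤ m), (fnm G f n m h).range

/-- The inverse limit of the subsequence `(G_n°)`: the coherent sequences all of whose
coordinates lie in the subgroups `G_n°`, as an `AddSubgroup` of `invLim G f` (so it carries the
inverse limit topology coming from the discrete topologies on the `G_n°`, i.e. the subspace
topology). -/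
def invLimCirc (G : ℕ → Type*) [∀ n, AddCommGroup (G n)]
    (f : ∀ n, G (n + 1) →+ G n) : AddSubgroup (invLim G f) where
  carrier := {x | ∀ n, (x : ∀ n, G n) n ∈ Gcirc G f n}
  add_mem' := fun ha hb n => add_mem (ha n) (hb n)
  zero_mem' := fun _ => zero_mem _
  neg_mem' := fun ha n => neg_mem (ha n)

lemma fnm_self (G : ℕ → Type*) [∀ n, AddCommGroup (G n)] (f : ∀ n, G (n + 1) →+ G n)
    (n : ℕ) : fnm G f n n le_rfl = AddMonoidHom.id (G n) :=
  Nat.leRecOn_self _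

lemma fnm_succ (G : ℕ → Type*) [∀ n, AddCommGroup (G n)] (f : ∀ n, G (n + 1) →+ G n)
    (n m : ℕ) (h : n ≤ m) :
    fnm G f n (m + 1) (h.trans (Nat.le_succ m)) = (fnm G f n m h).comp (f m) :=
  Nat.leRecOn_succ h _

lemma fnm_comp_left (G : ℕ → Type*) [∀ n, AddCommGroup (G n)] (f : ∀ n, G (n + 1) →+ G n)
    (n m : ℕ) (h : n + 1 ≤ m) :
    fnm G f n m ((Nat.le_succ n).trans h) = (f n).comp (fnm G f (n + 1) m h) := by
  induction m, h using Nat.le_induction with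
  | base =>
    rw [fnm_succ G f n n le_rfl, fnm_self, fnm_self]
    rfl
  | succ m h ih =>
    rw [fnm_succ G f n m ((Nat.le_succ n).trans h), fnm_succ G f (n + 1) m h, ih]
    rfl

lemma coherent_fnm (G : ℕ → Type*) [∀ n, AddCommGroup (G n)] (f : ∀ n, G (n + 1) →+ G n)
    (x : ∀ n, G n) (hx : x ∈ invLim G f) (n m : ℕ) (h : n ≤ m) :
    x n = fnm G f n m h (x m) := by
  induction m, h using Nat.le_induction with
  | base => rw [fnm_self]; rfl
  | succ m h ih => rw [fnm_succ G f n m h]; exact ih.trans (congrArg _ (hx m))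

/-- Let `(G n, f n)` be an inverse sequence of abelian groups indexed by `ℕ`
and define `G_n° = ⋂_{m ≥ n} Im (f_{n,m} : G m →+ G n)`.  Then each `f n` maps `G_{n+1}°` into
`G_n°`, so the `G_n°` form an inverse subsequence, and the inclusion maps induce an isomorphism
of topological groups `lim G_n° ≅ lim G_n` (both inverse limits carrying the inverse limit
topology coming from the discrete topologies). -/
theorem invLimCirc_iso_invLim (G : ℕ → Type*) [∀ n, AddCommGroup (G n)]
    [∀ n, TopologicalSpace (G n)] [∀ n, DiscreteTopology (G n)]
    (f : ∀ n, G (n + 1) →+ G n) :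
    (∀ n, (Gcirc G f (n + 1)).map (f n) ≤ Gcirc G f n) ∧
    ∃ e : invLimCirc G f ≃ₜ invLim G f,
      (∀ x y, e (x + y) = e x + e y) ∧ ∀ x, e x = (x : invLim G f) := by
  constructor
  · intro n y hy
    obtain ⟨z, hz, rfl⟩ := hy
    refine AddSubgroup.mem_iInf.2 fun m => AddSubgroup.mem_iInf.2 fun hm => ?_
    rcases Nat.eq_or_lt_of_le hm with rfl | hm'
    · exact ⟨f n z, by rw [fnm_self]; rfl⟩
    · have hm'' : n + 1 ≤ m := hm'
      have := AddSubgroup.mem_iInf.1 (AddSubgroup.mem_iInf.1 hz m) hm''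
      obtain ⟨w, hw⟩ := this
      refine ⟨w, ?_⟩
      have := fnm_comp_left G f n m hm''
      calc fnm G f n m hm w = ((f n).comp (fnm G f (n + 1) m hm'')) w := by rw [← this]
        _ = f n z := by rw [AddMonoidHom.comp_apply, hw]
  · have hall : ∀ x : invLim G f, ∀ n, (x : ∀ k, G k) n ∈ Gcirc G f n := by
      intro x n
      refine AddSubgroup.mem_iInf.2 fun m => AddSubgroup.mem_iInf.2 fun hm => ?_
      exact ⟨(x : ∀ k, G k) m, (coherent_fnm G f x x.2 n m hm).symm⟩
    refine ⟨{
      toFun := fun x => (x : invLim G f)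
      invFun := fun x => ⟨x, hall x⟩
      left_inv := fun x => rfl
      right_inv := fun x => rfl
      continuous_toFun := continuous_subtype_val
      continuous_invFun := Continuous.subtype_mk continuous_id (fun x => hall x) }, fun x y => rfl, fun x => rfl⟩
end

section
/- Let (G_n, f_n) be an inverse sequence of finite discrete abelian groups indexed by ℕ with all bonding maps f_n : G_{n+1} → G_n surjective, and suppose the sequence does not stabilize (for every N there exists m ≥ N with f_m not bijective). Then the inverse limit lim G_n is a nonempty compact metrizable perfect totally disconnected space, and hence is homeomorphic to the Cantor space ℕ → Bool (equivalently {0,1}^ℕ with the product topology). -/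
open Function Topology

/- ### Run-length parsing of binary sequences -/

private def runLen (x : ℕ → Bool) : ℕ → ℕ → ℕ
  | _, 0 => 0
  | s, b + 1 => if x s then runLen x (s + 1) b + 1 else 0

private lemma runLen_le (x : ℕ → Bool) : ∀ b s, runLen x s b ≤ b := by
  intro b
  induction b with
  | zero => intro s; simp [runLen]
  | succ b ih =>
    intro s
    simp only [runLen]
    split
    · exact Nat.succ_le_succ (ih (s + 1))
    · exact Nat.zero_le _

private lemma runLen_true (x : ℕ → Bool) : ∀ b s t, t < runLen x s b → x (s + t) = true := by
  intro b
  induction b with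
  | zero => intro s t h; simp [runLen] at h
  | succ b ih =>
    intro s t h
    simp only [runLen] at h
    by_cases hs : x s
    · rw [if_pos hs] at h
      match t with
      | 0 => simpa using hs
      | t + 1 =>
        have := ih (s + 1) t (by omega)
        rw [show s + (t + 1) = s + 1 + t by omega]
        exact this
    · rw [if_neg hs] at h; omega

private lemma runLen_false (x : ℕ → Bool) :
    ∀ b s, runLen x s b < b → x (s + runLen x s b) = false := by
  intro b
  induction b with
  | zero => intro s h; simp [runLen] at h
  | succ b ih =>
    intro s h
    simp only [runLen] at h ⊢
    by_cases hs : x s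
    · rw [if_pos hs] at h ⊢
      rw [show s + (runLen x (s + 1) b + 1) = s + 1 + runLen x (s + 1) b by omega]
      exact ih (s + 1) (by omega)
    · rw [if_neg hs] at h ⊢
      simpa using hs

private lemma runLen_eq (x : ℕ → Bool) :
    ∀ b s d, d ≤ b → (∀ t, t < d → x (s + t) = true) → (d < b → x (s + d) = false) →
      runLen x s b = d := by
  intro b
  induction b with
  | zero => intro s d h _ _; simp only [runLen]; omega
  | succ b ih =>
    intro s d hd ht hf
    simp only [runLen]
    match d with
    | 0 =>
      have h0 : x s = false := by simpa using hf (by omega)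
      rw [if_neg (by simp [h0])]
    | d + 1 =>
      have h0 : x s = true := by simpa using ht 0 (by omega)
      rw [if_pos h0]
      have : runLen x (s + 1) b = d := by
        apply ih (s + 1) d (by omega)
        · intro t htl
          have := ht (t + 1) (by omega)
          rwa [show s + (t + 1) = s + 1 + t by omega] at this
        · intro hdb
          have := hf (by omega)
          rwa [show s + (d + 1) = s + 1 + d by omega] at this
      omega

private lemma runLen_congr (x y : ℕ → Bool) :
    ∀ b s, (∀ i, s ≤ i → i < s + b → x i = y i) → runLen x s b = runLen y s b := by
  intro b
  induction b with
  | zero => intro s _; simp [runLen]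
  | succ b ih =>
    intro s h
    have hs : x s = y s := h s le_rfl (by omega)
    simp only [runLen, hs]
    split
    · rw [ih (s + 1) (fun i h1 h2 => h i (by omega) (by omega))]
    · rfl

/- ### The parsing map from the Cantor space to a product of `Fin`s -/

private def codeLen (c : ℕ → ℕ) (k d : ℕ) : ℕ := d + (if d = c k - 1 then 0 else 1)

private def psPos (c : ℕ → ℕ) (x : ℕ → Bool) : ℕ → ℕ
  | 0 => 0
  | k + 1 => psPos c x k + codeLen c k (runLen x (psPos c x k) (c k - 1))

private def psDig (c : ℕ → ℕ) (x : ℕ → Bool) (k : ℕ) : ℕ :=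
  runLen x (psPos c x k) (c k - 1)

private lemma psPos_succ (c : ℕ → ℕ) (x : ℕ → Bool) (k : ℕ) :
    psPos c x (k + 1) = psPos c x k + codeLen c k (psDig c x k) := rfl

private lemma psDig_le (c : ℕ → ℕ) (x : ℕ → Bool) (k : ℕ) : psDig c x k ≤ c k - 1 :=
  runLen_le x _ _

private lemma psDig_lt (c : ℕ → ℕ) (hc1 : ∀ k, 1 ≤ c k) (x : ℕ → Bool) (k : ℕ) :
    psDig c x k < c k := by
  have := psDig_le c x k; have := hc1 k; omega

private lemma codeLen_le (c : ℕ → ℕ) {k d : ℕ} (hd : d ≤ c k - 1) : codeLen c k d ≤ c k := by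
  unfold codeLen; split <;> omega

private lemma codeLen_pos (c : ℕ → ℕ) {k : ℕ} (hck : 2 ≤ c k) (d : ℕ) :
    1 ≤ codeLen c k d := by
  unfold codeLen; split <;> omega

private def bSum (c : ℕ → ℕ) (k : ℕ) : ℕ := ∑ j ∈ Finset.range k, c j

private lemma bSum_succ (c : ℕ → ℕ) (k : ℕ) : bSum c (k + 1) = bSum c k + c k :=
  Finset.sum_range_succ _ _

private lemma bSum_mono (c : ℕ → ℕ) {k l : ℕ} (h : k ≤ l) : bSum c k ≤ bSum c l := by
  unfold bSum
  exact Finset.sum_le_sum_of_subset (Finset.range_subset_range.2 h)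

private lemma psPos_le (c : ℕ → ℕ) (x : ℕ → Bool) : ∀ k, psPos c x k ≤ bSum c k := by
  intro k
  induction k with
  | zero => simp [psPos, bSum]
  | succ k ih =>
    rw [psPos_succ, bSum_succ]
    have := codeLen_le c (psDig_le c x k)
    omega

private lemma ps_congr (c : ℕ → ℕ) (x y : ℕ → Bool) :
    ∀ k, (∀ i, i < bSum c (k + 1) → x i = y i) →
      psPos c x k = psPos c y k ∧ psDig c x k = psDig c y k := by
  intro k
  induction k with
  | zero =>
    intro h
    refine ⟨rfl, ?_⟩
    apply runLen_congr
    intro i h1 h2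
    apply h
    have : psPos c x 0 = 0 := rfl
    rw [bSum_succ]
    have : bSum c 0 = 0 := rfl
    omega
  | succ k ih =>
    intro h
    have hxy := ih (fun i hi => h i (lt_of_lt_of_le hi (bSum_mono c (by omega))))
    have hpos : psPos c x (k + 1) = psPos c y (k + 1) := by
      rw [psPos_succ, psPos_succ, hxy.1, hxy.2]
    refine ⟨hpos, ?_⟩
    unfold psDig
    rw [hpos]
    apply runLen_congr
    intro i h1 h2
    apply h
    have hle := psPos_le c y (k + 1)
    rw [bSum_succ]
    omega

private lemma psPos_mono (c : ℕ → ℕ) (x : ℕ → Bool) : Monotone (psPos c x) := by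
  apply monotone_nat_of_le_succ
  intro k
  rw [psPos_succ]
  omega

private lemma psPos_unbounded (c : ℕ → ℕ) (hc2 : ∀ N, ∃ k, N ≤ k ∧ 2 ≤ c k)
    (x : ℕ → Bool) : ∀ m, ∃ k, m < psPos c x k := by
  intro m
  induction m with
  | zero =>
    obtain ⟨k, _, hk2⟩ := hc2 0
    refine ⟨k + 1, ?_⟩
    rw [psPos_succ]
    have := codeLen_pos c hk2 (psDig c x k)
    omega
  | succ m ihm =>
    obtain ⟨k, hk⟩ := ihm
    obtain ⟨k', hkk', hk2⟩ := hc2 k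
    have hmono := psPos_mono c x hkk'
    refine ⟨k' + 1, ?_⟩
    rw [psPos_succ]
    have := codeLen_pos c hk2 (psDig c x k')
    omega

private lemma exists_block (g : ℕ → ℕ) (h0 : g 0 = 0) (mono : Monotone g) {m K : ℕ}
    (hK : m < g K) : ∃ k, g k ≤ m ∧ m < g (k + 1) := by
  classical
  have hP0 : g 0 ≤ m := by rw [h0]; exact Nat.zero_le m
  have h1 : g (Nat.findGreatest (fun k => g k ≤ m) K) ≤ m :=
    Nat.findGreatest_spec (P := fun k => g k ≤ m) (Nat.zero_le K) hP0
  have hkK : Nat.findGreatest (fun k => g k ≤ m) K ≤ K := Nat.findGreatest_le K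
  refine ⟨Nat.findGreatest (fun k => g k ≤ m) K, h1, ?_⟩
  by_cases h : Nat.findGreatest (fun k => g k ≤ m) K + 1 ≤ K
  · have h2 := Nat.findGreatest_is_greatest (Nat.lt_succ_self _) h
    exact Nat.lt_of_not_le h2
  · have hkeq : Nat.findGreatest (fun k => g k ≤ m) K = K := by omega
    have := mono (show K ≤ Nat.findGreatest (fun k => g k ≤ m) K + 1 by omega)
    omega

/-- The parsing map `(ℕ → Bool) → ∀ k, Fin (c k)`. -/
private noncomputable def psi (c : ℕ → ℕ) (hc1 : ∀ k, 1 ≤ c k) (x : ℕ → Bool)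
    (k : ℕ) : Fin (c k) := ⟨psDig c x k, psDig_lt c hc1 x k⟩

private lemma psi_inj (c : ℕ → ℕ) (hc1 : ∀ k, 1 ≤ c k)
    (hc2 : ∀ N, ∃ k, N ≤ k ∧ 2 ≤ c k) : Function.Injective (psi c hc1) := by
  intro x y hxy
  have hd : ∀ k, psDig c x k = psDig c y k := by
    intro k
    have := congrFun hxy k
    exact congrArg Fin.val this
  have hp : ∀ k, psPos c x k = psPos c y k := by
    intro k
    induction k with
    | zero => rfl
    | succ k ih => rw [psPos_succ, psPos_succ, ih, hd]
  funext m
  obtain ⟨K, hK⟩ := psPos_unbounded c hc2 x m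
  obtain ⟨k, hk1, hk2⟩ := exists_block (psPos c x) rfl (psPos_mono c x) hK
  rw [psPos_succ] at hk2
  by_cases ht : m - psPos c x k < psDig c x k
  · have hx := runLen_true x (c k - 1) (psPos c x k) (m - psPos c x k) ht
    have ht' : m - psPos c y k < psDig c y k := by rw [← hp k, ← hd k]; exact ht
    have hy := runLen_true y (c k - 1) (psPos c y k) (m - psPos c y k) ht'
    rw [show psPos c x k + (m - psPos c x k) = m by omega] at hx
    rw [← hp, show psPos c x k + (m - psPos c x k) = m by omega] at hy
    rw [hx, hy]
  · have hcl : m - psPos c x k = psDig c x k ∧ psDig c x k ≠ c k - 1 := by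
      unfold codeLen at hk2
      split at hk2 <;> omega
    have hdlt : psDig c x k < c k - 1 := lt_of_le_of_ne (psDig_le c x k) hcl.2
    have hx := runLen_false x (c k - 1) (psPos c x k) hdlt
    have hdlt' : psDig c y k < c k - 1 := by rw [← hd k]; exact hdlt
    have hy := runLen_false y (c k - 1) (psPos c y k) hdlt'
    have hxm : psPos c x k + runLen x (psPos c x k) (c k - 1) = m := by
      have : runLen x (psPos c x k) (c k - 1) = psDig c x k := rfl
      omega
    rw [hxm] at hx
    have hym : psPos c y k + runLen y (psPos c y k) (c k - 1) = m := by
      have h1 : runLen y (psPos c y k) (c k - 1) = psDig c y k := rfl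
      have := hd k; have := hp k
      omega
    rw [hym] at hy
    rw [hx, hy]

private lemma psi_surj (c : ℕ → ℕ) (hc1 : ∀ k, 1 ≤ c k) :
    Function.Surjective (psi c hc1) := by
  intro v
  classical
  let q : ℕ → ℕ := fun n => Nat.rec 0 (fun k qk => qk + codeLen c k (v k : ℕ)) n
  have hq0 : q 0 = 0 := rfl
  have hqs : ∀ k, q (k + 1) = q k + codeLen c k (v k : ℕ) := fun k => rfl
  have qmono : Monotone q := by
    apply monotone_nat_of_le_succ
    intro k; rw [hqs]; omega
  let x : ℕ → Bool := fun m => @decide (∃ k, q k ≤ m ∧ m < q k + (v k : ℕ)) (Classical.propDecidable _)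
  have digOf : ∀ k, psPos c x k = q k → psDig c x k = (v k : ℕ) := by
    intro k hk
    unfold psDig
    rw [hk]
    apply runLen_eq
    · have := (v k).2; omega
    · intro t htl
      exact @decide_eq_true _ (Classical.propDecidable _) ⟨k, by omega, by omega⟩
    · intro hlt
      apply @decide_eq_false _ (Classical.propDecidable _)
      rintro ⟨j, hj1, hj2⟩
      rcases lt_trichotomy j k with hjk | rfl | hjk
      · have h1 : q j + (v j : ℕ) ≤ q (j + 1) := by
          rw [hqs]; unfold codeLen; split <;> omega
        have h2 : q (j + 1) ≤ q k := qmono (show j + 1 ≤ k by omega)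
        omega
      · omega
      · have h2 : q (k + 1) ≤ q j := qmono hjk
        rw [hqs] at h2
        unfold codeLen at h2
        rw [if_neg (by omega)] at h2
        omega
  have key : ∀ k, psPos c x k = q k ∧ psDig c x k = (v k : ℕ) := by
    intro k
    induction k with
    | zero => exact ⟨rfl, digOf 0 rfl⟩
    | succ k ih =>
      have hp : psPos c x (k + 1) = q (k + 1) := by
        rw [psPos_succ, ih.1, ih.2, hqs]
      exact ⟨hp, digOf _ hp⟩
  refine ⟨x, funext fun k => Fin.ext ?_⟩
  exact (key k).2

private lemma psi_cont (c : ℕ → ℕ) (hc1 : ∀ k, 1 ≤ c k) : Continuous (psi c hc1) := by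
  apply continuous_pi
  intro k
  classical
  set B := bSum c (k + 1) with hB
  let pad : (Fin B → Bool) → (ℕ → Bool) := fun w i => if h : i < B then w ⟨i, h⟩ else false
  have hfact : (fun x => psi c hc1 x k) =
      (fun w : Fin B → Bool => psi c hc1 (pad w) k) ∘ (fun x (i : Fin B) => x i.1) := by
    funext x
    apply Fin.ext
    show psDig c x k = psDig c (pad fun i : Fin B => x i.1) k
    exact ((ps_congr c x _ k (fun i hi => by simp only [pad]; rw [dif_pos (show i < B from hi)])).2)
  rw [hfact]
  exact (continuous_of_discreteTopology).comp (continuous_pi fun i => continuous_apply _)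

/-- The Cantor space is homeomorphic to any countable product of finite discrete
spaces `Fin (c k)` with all `c k ≥ 1` and infinitely many `c k ≥ 2`. -/
private lemma nonempty_homeo_cantor_pi (c : ℕ → ℕ) (hc1 : ∀ k, 1 ≤ c k)
    (hc2 : ∀ N, ∃ k, N ≤ k ∧ 2 ≤ c k) :
    Nonempty ((ℕ → Bool) ≃ₜ ∀ k, Fin (c k)) := by
  refine ⟨Continuous.homeoOfEquivCompactToT2
    (f := Equiv.ofBijective (psi c hc1) ⟨psi_inj c hc1 hc2, psi_surj c hc1⟩) ?_⟩
  exact psi_cont c hc1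

/- ### The Cantor space is perfect -/

private lemma perfect_cantor : PerfectSpace (ℕ → Bool) := by
  rw [perfectSpace_iff_forall_not_isolated]
  intro x
  rw [nhdsWithin_neBot]
  intro t ht
  rw [mem_nhds_iff] at ht
  obtain ⟨U, hUt, hU, hxU⟩ := ht
  obtain ⟨I, u, hIu, hsub⟩ := isOpen_pi_iff.mp hU x hxU
  obtain ⟨n, hn⟩ := Infinite.exists_notMem_finset I
  refine ⟨Function.update x n (!(x n)), hUt (hsub ?_), ?_⟩
  · intro a ha
    rw [Function.update_of_ne (by rintro rfl; exact hn ha)]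
    exact (hIu a ha).2
  · simp only [Set.mem_compl_iff, Set.mem_singleton_iff]
    intro h
    have h2 := congrFun h n
    rw [Function.update_self] at h2
    simp at h2

/- ### The inverse limit as a product space -/

section InvLimProd

variable (G : ℕ → Type*) [∀ n, AddCommGroup (G n)]
    [∀ n, TopologicalSpace (G n)] [∀ n, DiscreteTopology (G n)]
    (f : ∀ n, G (n + 1) →+ G n)

private def DD : ℕ → Type _
  | 0 => G 0
  | m + 1 => ↥(f m).ker

private instance (n : ℕ) : TopologicalSpace (DD G f n) :=
  match n with
  | 0 => inferInstanceAs (TopologicalSpace (G 0))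
  | m + 1 => inferInstanceAs (TopologicalSpace ↥(f m).ker)

private instance (n : ℕ) : DiscreteTopology (DD G f n) :=
  match n with
  | 0 => inferInstanceAs (DiscreteTopology (G 0))
  | m + 1 => inferInstanceAs (DiscreteTopology ↥(f m).ker)

private lemma invLim_spec (x : ↥(invLim G f)) (n : ℕ) : x.1 n = f n (x.1 (n + 1)) :=
  x.2 n

private noncomputable def sec (hsurj : ∀ n, Function.Surjective (f n)) (n : ℕ) :
    G n → G (n + 1) := Function.surjInv (hsurj n)

private lemma sec_eq (hsurj : ∀ n, Function.Surjective (f n)) (n : ℕ) (g : G n) :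
    f n (sec G f hsurj n g) = g := Function.surjInv_eq (hsurj n) g

private noncomputable def recon (hsurj : ∀ n, Function.Surjective (f n))
    (cc : ∀ n, DD G f n) : ∀ n, G n
  | 0 => cc 0
  | m + 1 => sec G f hsurj m (recon hsurj cc m) + ((show ↥(f m).ker from cc (m + 1)) : G (m + 1))

private lemma recon_mem (hsurj : ∀ n, Function.Surjective (f n)) (cc : ∀ n, DD G f n) :
    recon G f hsurj cc ∈ invLim G f := by
  intro n
  show recon G f hsurj cc n = f n (recon G f hsurj cc (n + 1))
  have h1 : recon G f hsurj cc (n + 1)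
      = sec G f hsurj n (recon G f hsurj cc n) + ((show ↥(f n).ker from cc (n + 1)) : G (n + 1)) := rfl
  have hker : f n ((show ↥(f n).ker from cc (n + 1)) : G (n + 1)) = 0 :=
    AddMonoidHom.mem_ker.mp (show ↥(f n).ker from cc (n + 1)).2
  rw [h1, map_add, sec_eq G f hsurj n, hker, add_zero]

private noncomputable def decomp (hsurj : ∀ n, Function.Surjective (f n))
    (x : ↥(invLim G f)) : ∀ n, DD G f n
  | 0 => x.1 0
  | m + 1 => (⟨x.1 (m + 1) - sec G f hsurj m (x.1 m), by
      rw [AddMonoidHom.mem_ker, map_sub, sec_eq G f hsurj m,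
        ← invLim_spec G f x m, sub_self]⟩ : ↥(f m).ker)

private lemma recon_decomp (hsurj : ∀ n, Function.Surjective (f n)) (x : ↥(invLim G f)) :
    recon G f hsurj (decomp G f hsurj x) = x.1 := by
  funext n
  induction n with
  | zero => rfl
  | succ m ih =>
    show sec G f hsurj m (recon G f hsurj (decomp G f hsurj x) m)
        + (x.1 (m + 1) - sec G f hsurj m (x.1 m)) = x.1 (m + 1)
    rw [ih]
    abel

private lemma decomp_recon (hsurj : ∀ n, Function.Surjective (f n)) (cc : ∀ n, DD G f n) :
    decomp G f hsurj ⟨recon G f hsurj cc, recon_mem G f hsurj cc⟩ = cc := by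
  funext n
  match n with
  | 0 => rfl
  | m + 1 =>
    apply Subtype.ext
    show (sec G f hsurj m (recon G f hsurj cc m) + ((show ↥(f m).ker from cc (m + 1)) : G (m + 1)))
        - sec G f hsurj m (recon G f hsurj cc m) = ((show ↥(f m).ker from cc (m + 1)) : G (m + 1))
    abel

private noncomputable def invLimEquiv (hsurj : ∀ n, Function.Surjective (f n)) :
    (∀ n, DD G f n) ≃ ↥(invLim G f) where
  toFun cc := ⟨recon G f hsurj cc, recon_mem G f hsurj cc⟩
  invFun := decomp G f hsurj
  left_inv cc := decomp_recon G f hsurj cc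
  right_inv x := Subtype.ext (recon_decomp G f hsurj x)

private noncomputable def reconFin (hsurj : ∀ n, Function.Surjective (f n)) :
    ∀ n, (∀ i : Fin (n + 1), DD G f i.1) → G n
  | 0 => fun v => v ⟨0, Nat.zero_lt_one⟩
  | m + 1 => fun v =>
      sec G f hsurj m (reconFin hsurj m (fun i => v ⟨i.1, by omega⟩))
        + ((show ↥(f m).ker from v ⟨m + 1, Nat.lt_succ_self _⟩) : G (m + 1))

private lemma recon_eq_fin (hsurj : ∀ n, Function.Surjective (f n)) (cc : ∀ n, DD G f n) :
    ∀ n, recon G f hsurj cc n = reconFin G f hsurj n (fun i => cc i.1) := by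
  intro n
  induction n with
  | zero => rfl
  | succ m ih =>
    show sec G f hsurj m (recon G f hsurj cc m) + _
        = sec G f hsurj m (reconFin G f hsurj m _) + _
    rw [ih]

private lemma recon_cont (hsurj : ∀ n, Function.Surjective (f n)) :
    Continuous (fun cc : ∀ n, DD G f n => recon G f hsurj cc) := by
  apply continuous_pi
  intro n
  have h : (fun cc : ∀ n, DD G f n => recon G f hsurj cc n)
      = (reconFin G f hsurj n) ∘ (fun cc (i : Fin (n + 1)) => cc i.1) := by
    funext cc; exact recon_eq_fin G f hsurj cc n
  rw [h]
  exact (continuous_of_discreteTopology).comp (continuous_pi fun i => continuous_apply _)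

end InvLimProd

/-- Let `(G n, f n)` be an inverse sequence of finite discrete abelian groups
indexed by `ℕ` with all bonding maps `f n : G (n+1) → G n` surjective, and suppose the sequence
does not stabilize (for every `N` there exists `m ≥ N` with `f m` not bijective).  Then the
inverse limit `lim G n` is a nonempty compact metrizable perfect totally disconnected space,
and hence is homeomorphic to the Cantor space `ℕ → Bool`. -/
theorem invLim_homeomorph_cantor
    (G : ℕ → Type*) [∀ n, AddCommGroup (G n)] [∀ n, Finite (G n)]
    [∀ n, TopologicalSpace (G n)] [∀ n, DiscreteTopology (G n)]
    (f : ∀ n, G (n + 1) →+ G n)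
    (hsurj : ∀ n, Function.Surjective (f n))
    (hns : ∀ N : ℕ, ∃ m, N ≤ m ∧ ¬Function.Bijective (f m)) :
    Nonempty (invLim G f) ∧ CompactSpace (invLim G f) ∧
      TopologicalSpace.MetrizableSpace (invLim G f) ∧ PerfectSpace (invLim G f) ∧
      TotallyDisconnectedSpace (invLim G f) ∧
      Nonempty (invLim G f ≃ₜ (ℕ → Bool)) := by
  classical
  haveI hFin : ∀ n, Finite (DD G f n) := fun n =>
    match n with
    | 0 => inferInstanceAs (Finite (G 0))
    | m + 1 => inferInstanceAs (Finite ↥(f m).ker)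
  haveI hNe : ∀ n, Nonempty (DD G f n) := fun n =>
    match n with
    | 0 => (⟨0⟩ : Nonempty (G 0))
    | m + 1 => (⟨0⟩ : Nonempty ↥(f m).ker)
  set c : ℕ → ℕ := fun n => Nat.card (DD G f n) with hcdef
  have hc1 : ∀ k, 1 ≤ c k := fun k => Nat.card_pos
  have hc2 : ∀ N, ∃ k, N ≤ k ∧ 2 ≤ c k := by
    intro N
    obtain ⟨m, hm, hnb⟩ := hns N
    have hninj : ¬Function.Injective (f m) := fun hinj => hnb ⟨hinj, hsurj m⟩
    rw [Function.not_injective_iff] at hninj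
    obtain ⟨a, b, hab, hne⟩ := hninj
    have hmem : a - b ∈ (f m).ker := by
      rw [AddMonoidHom.mem_ker, map_sub, hab, sub_self]
    have hnt : Nontrivial ↥(f m).ker :=
      ⟨⟨⟨a - b, hmem⟩, 0, by simp [Subtype.ext_iff, sub_eq_zero, hne]⟩⟩
    refine ⟨m + 1, by omega, ?_⟩
    have h2 : 1 < Nat.card (DD G f (m + 1)) :=
      Finite.one_lt_card_iff_nontrivial.mpr hnt
    have h3 : c (m + 1) = Nat.card (DD G f (m + 1)) := rfl
    omega
  obtain ⟨hcan⟩ := nonempty_homeo_cantor_pi c hc1 hc2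
  have hcont : Continuous (invLimEquiv G f hsurj) :=
    Continuous.subtype_mk (recon_cont G f hsurj) _
  let h1 : (∀ n, DD G f n) ≃ₜ ↥(invLim G f) :=
    Continuous.homeoOfEquivCompactToT2 (f := invLimEquiv G f hsurj) hcont
  let e : ∀ n, DD G f n ≃ₜ Fin (c n) := fun n =>
    { Finite.equivFin (DD G f n) with
      continuous_toFun := continuous_of_discreteTopology
      continuous_invFun := continuous_of_discreteTopology }
  let H : ↥(invLim G f) ≃ₜ (ℕ → Bool) :=
    (h1.symm.trans (Homeomorph.piCongrRight e)).trans hcan.symm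
  haveI hperfC : PerfectSpace (ℕ → Bool) := perfect_cantor
  have hperf : PerfectSpace ↥(invLim G f) := by
    rw [perfectSpace_iff_forall_not_isolated]
    intro x
    rw [nhdsWithin_neBot]
    intro t ht
    have ht' : ⇑H.symm ⁻¹' t ∈ nhds (H x) :=
      (H.symm.continuous.continuousAt).preimage_mem_nhds
        (by rw [Homeomorph.symm_apply_apply]; exact ht)
    obtain ⟨y, hy1, hy2⟩ := nhdsWithin_neBot.mp (PerfectSpace.not_isolated (H x)) ht'
    refine ⟨H.symm y, hy1, ?_⟩
    simp only [Set.mem_compl_iff, Set.mem_singleton_iff] at hy2 ⊢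
    intro hxx
    exact hy2 (by rw [← hxx]; exact (H.apply_symm_apply y).symm)
  have htd : TotallyDisconnectedSpace ↥(invLim G f) := inferInstance
  exact ⟨⟨H.symm (fun _ => false)⟩, H.symm.compactSpace, H.isEmbedding.metrizableSpace,
    hperf, htd, ⟨H⟩⟩
end

section
/- Let (G_n, f_n) be an inverse sequence of countable discrete abelian groups indexed by ℕ with all bonding maps f_n : G_{n+1} → G_n surjective, and suppose: the sequence does not stabilize, the set {n : ker(f_n) is infinite} is finite, and at least one kernel ker(f_n) is infinite. Then the inverse limit lim G_n is homeomorphic to ℕ × (ℕ → Bool), the product of the discrete space ℕ with the Cantor space; in particular lim G_n is locally compact but not compact. -/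
/-!
Choosing set-theoretic sections `s n` of the surjections `f n`, a coherent sequence `x` is
determined by `x 0` and its defects `x (n + 1) - s n (x n) ∈ ker (f n)`, so that
`lim G n ≃ₜ G 0 × ∏ ker (f n)`. Together with `G 0`, the finitely many infinite kernels make up a
countably infinite discrete factor, homeomorphic to `ℕ`. The other kernels are finite, and
infinitely many of them are nontrivial because the sequence does not stabilize; their product is a
Cantor space, since parsing a bit stream with a complete prefix code on `k n` letters at step `n`
is a continuous bijection from `ℕ → Bool` onto `∏ Fin (k n)`.
-/

theorem DependsOn.continuous {ι : Type*} {X : ι → Type*} [∀ i, TopologicalSpace (X i)]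
    [∀ i, DiscreteTopology (X i)] {Y : Type*} [TopologicalSpace Y] {f : (∀ i, X i) → Y}
    {s : Set ι} (hf : DependsOn f s) (hs : s.Finite) : Continuous f := by
  refine IsLocallyConstant.continuous <| (IsLocallyConstant.iff_eventually_eq f).2 fun x => ?_
  filter_upwards [set_pi_mem_nhds hs fun i _ => (isOpen_discrete {x i}).mem_nhds rfl]
    with y hy using hf hy

namespace CappedUnary

section

variable (k : ℕ)

/- The codewords `1^x 0` for `x < k - 1` and `1^(k-1)` form a complete prefix code: every bit
stream starts with exactly one of them. Bit streams are `Stream' Bool`, which is definitionally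
the Cantor space `ℕ → Bool`. -/
def word (x : ℕ) : List Bool := List.ofFn fun j : Fin (min (x + 1) (k - 1)) => decide (j < x)

def digit (b : Stream' Bool) : ℕ :=
  Nat.find (⟨k - 1, Or.inl le_rfl⟩ : ∃ j, k - 1 ≤ j ∨ b.get j = false)

def rest (b : Stream' Bool) : Stream' Bool := b.drop (word k (digit k b)).length

variable {k}

theorem digit_le (b : Stream' Bool) : digit k b ≤ k - 1 := Nat.find_min' _ (Or.inl le_rfl)

theorem length_word (x : ℕ) : (word k x).length = min (x + 1) (k - 1) := List.length_ofFn

theorem getElem_word {x j : ℕ} (hj : j < (word k x).length) : (word k x)[j] = decide (j < x) := by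
  simp [word]

theorem digit_eq_iff {x : ℕ} (hx : x < k) {b : Stream' Bool} :
    digit k b = x ↔ ∀ j < min (x + 1) (k - 1), b.get j = decide (j < x) := by
  rw [digit, Nat.find_eq_iff]
  constructor
  · rintro ⟨hspec, hmin⟩ j hj
    rcases Nat.lt_or_ge j x with hjx | hjx
    · simpa [hjx] using fun h => hmin j hjx (Or.inr h)
    · have : j = x := by omega
      subst this
      simpa [show ¬k - 1 ≤ j by omega] using hspec
  · intro h
    refine ⟨?_, fun j hj => ?_⟩
    · by_cases hxk : k - 1 ≤ x
      · exact Or.inl hxk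
      · exact Or.inr (by simpa using h x (by omega))
    · simp [show ¬k - 1 ≤ j by omega, h j (by omega), hj]

theorem digit_word_append {x : ℕ} (hx : x < k) (c : Stream' Bool) :
    digit k (word k x ++ₛ c) = x :=
  (digit_eq_iff hx).2 fun j hj => by
    rw [Stream'.get_append_left j _ _ (by rwa [length_word]), getElem_word]

theorem rest_word_append {x : ℕ} (hx : x < k) (c : Stream' Bool) :
    rest k (word k x ++ₛ c) = c := by
  rw [rest, digit_word_append hx, Stream'.drop_append_stream]

theorem word_digit_append_rest (hk : 1 ≤ k) (b : Stream' Bool) :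
    word k (digit k b) ++ₛ rest k b = b := by
  have hb := (digit_eq_iff (k := k) (b := b) (by have := digit_le (k := k) b; omega)).1 rfl
  conv_rhs => rw [← Stream'.append_take_drop (word k (digit k b)).length b]
  congr 1
  refine List.ext_getElem (Stream'.length_take _ _).symm fun j hj _ => ?_
  rw [getElem_word, Stream'.take_get, hb j (by rwa [length_word] at hj)]

theorem continuous_digit : Continuous fun b : ℕ → Bool => digit k b := by
  refine DependsOn.continuous (s := Set.Iio k) (fun b b' h => Nat.find_congr' fun {j} => ?_)
    (Set.finite_Iio k)
  by_cases hj : j < k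
  · change _ ∨ b j = false ↔ _ ∨ b' j = false
    rw [h j hj]
  · simp only [show k - 1 ≤ j by omega, true_or]

theorem continuous_rest : Continuous (X := ℕ → Bool) (Y := ℕ → Bool) (rest k) := by
  refine continuous_pi fun j => ?_
  have hshift : Continuous fun p : ℕ × (ℕ → Bool) => p.2 (j + p.1) :=
    continuous_prod_of_discrete_left.2 fun a => continuous_apply (j + a)
  exact hshift.comp (((continuous_of_discreteTopology (f := fun d => (word k d).length)).comp
    continuous_digit).prodMk continuous_id)

end

def decode : (ℕ → ℕ) → Stream' Bool → ℕ → ℕ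
  | k, b, 0 => digit (k 0) b
  | k, b, n + 1 => decode (fun i => k (i + 1)) (rest (k 0) b) n

variable {k : ℕ → ℕ}

theorem decode_lt (hk : ∀ n, 1 ≤ k n) (b : Stream' Bool) (n : ℕ) : decode k b n < k n := by
  induction n generalizing k b with
  | zero => have := digit_le (k := k 0) b; have := hk 0; simp only [decode]; omega
  | succ n ih => exact ih (fun i => hk (i + 1)) _

theorem continuous_decode (n : ℕ) : Continuous fun b : ℕ → Bool => decode k b n := by
  induction n generalizing k with
  | zero => exact continuous_digit
  | succ n ih => exact ih.comp continuous_rest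

theorem exists_common_prefix_of_decode_eq (hk : ∀ n, 2 ≤ k n) {b b' : Stream' Bool} {n : ℕ}
    (h : ∀ i < n, decode k b i = decode k b' i) :
    ∃ (W : List Bool) (c c' : Stream' Bool), n ≤ W.length ∧ b = W ++ₛ c ∧ b' = W ++ₛ c' := by
  induction n generalizing k b b' with
  | zero => exact ⟨[], b, b', le_rfl, rfl, rfl⟩
  | succ n ih =>
    obtain ⟨W, c, c', hW, hc, hc'⟩ :=
      ih (k := fun i => k (i + 1)) (fun i => hk (i + 1)) fun i hi => h (i + 1) (by omega)
    have hd : digit (k 0) b = digit (k 0) b' := h 0 n.succ_pos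
    refine ⟨word (k 0) (digit (k 0) b) ++ W, c, c', ?_, ?_, ?_⟩
    · have := hk 0
      rw [List.length_append, length_word]
      omega
    · rw [Stream'.append_append_stream, ← hc, word_digit_append_rest (one_le_two.trans (hk 0))]
    · rw [Stream'.append_append_stream, ← hc', hd, word_digit_append_rest (one_le_two.trans (hk 0))]

theorem decode_injective (hk : ∀ n, 2 ≤ k n) : Function.Injective (decode k) := by
  intro b b' h
  refine Stream'.ext fun m => ?_
  obtain ⟨W, c, c', hW, rfl, rfl⟩ :=
    exists_common_prefix_of_decode_eq (n := m + 1) hk fun i _ => congrFun h i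
  rw [Stream'.get_append_left m W c (by omega), Stream'.get_append_left m W c' (by omega)]

theorem exists_forall_lt_decode_eq {x : ℕ → ℕ} (hx : ∀ n, x n < k n) (n : ℕ) :
    ∃ b, ∀ i < n, decode k b i = x i := by
  induction n generalizing k x with
  | zero => exact ⟨Stream'.const false, by simp⟩
  | succ n ih =>
    obtain ⟨c, hc⟩ := ih fun i => hx (i + 1)
    refine ⟨word (k 0) (x 0) ++ₛ c, fun i hi => ?_⟩
    cases i with
    | zero => exact digit_word_append (hx 0) c
    | succ i =>
      simp only [decode]
      rw [rest_word_append (hx 0)]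
      exact hc i (by omega)

theorem exists_decode_eq {x : ℕ → ℕ} (hx : ∀ n, x n < k n) :
    ∃ b, decode k b = x := by
  let S : ℕ → Set (ℕ → Bool) := fun n => {b | ∀ i < n, decode k b i = x i}
  have hclosed (n : ℕ) : IsClosed (S n) := by
    simp only [S, Set.ofPred_forall]
    exact isClosed_iInter fun i => isClosed_iInter fun _ =>
      isClosed_eq (continuous_decode i) continuous_const
  obtain ⟨b, hb⟩ := IsCompact.nonempty_iInter_of_sequence_nonempty_isCompact_isClosed S
    (fun n b hb i hi => hb i (by omega)) (exists_forall_lt_decode_eq hx)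
    (hclosed 0).isCompact hclosed
  exact ⟨b, funext fun i => Set.mem_iInter.1 hb (i + 1) i i.lt_succ_self⟩

theorem nonempty_cantor_homeomorph_pi_fin (hk : ∀ n, 2 ≤ k n) :
    Nonempty ((ℕ → Bool) ≃ₜ ∀ n, Fin (k n)) := by
  let e : (ℕ → Bool) ≃ ∀ n, Fin (k n) :=
    Equiv.ofBijective (fun b n => ⟨decode k b n, decode_lt (fun n => one_le_two.trans (hk n)) b n⟩)
      ⟨fun b b' h => decode_injective hk (funext fun n => congrArg Fin.val (congrFun h n)),
        fun x => (exists_decode_eq fun n => (x n).isLt).imp fun b hb =>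
          funext fun n => Fin.ext (congrFun hb n)⟩
  refine ⟨Continuous.homeoOfEquivCompactToT2 (f := e) (continuous_pi fun n => ?_)⟩
  refine continuous_discrete_rng.2 fun d => ?_
  convert (isOpen_discrete {(d : ℕ)}).preimage (continuous_decode (k := k) n) using 1
  ext b
  exact Fin.ext_iff

end CappedUnary

theorem nonempty_pi_homeomorph_cantor_of_nontrivial (K : ℕ → Type*) [∀ n, TopologicalSpace (K n)]
    [∀ n, DiscreteTopology (K n)] [∀ n, Finite (K n)] [∀ n, Nontrivial (K n)] :
    Nonempty ((∀ n, K n) ≃ₜ (ℕ → Bool)) := by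
  obtain ⟨e⟩ := CappedUnary.nonempty_cantor_homeomorph_pi_fin (k := fun n => Nat.card (K n))
    fun n => Finite.one_lt_card_iff_nontrivial.2 inferInstance
  exact ⟨(Homeomorph.piCongrRight fun n => (Finite.equivFin (K n)).toHomeomorphOfDiscrete).trans
    e.symm⟩

theorem nonempty_pi_homeomorph_cantor {ι : Type*} [Countable ι] (K : ι → Type*)
    [∀ i, TopologicalSpace (K i)] [∀ i, DiscreteTopology (K i)] [∀ i, Finite (K i)]
    [∀ i, Nonempty (K i)] (h : {i | Nontrivial (K i)}.Infinite) :
    Nonempty ((∀ i, K i) ≃ₜ (ℕ → Bool)) := by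
  classical
  have : Infinite {i // Nontrivial (K i)} := h.to_subtype
  obtain ⟨e⟩ : Nonempty (ℕ ≃ {i // Nontrivial (K i)}) := nonempty_equiv_of_countable
  have : ∀ n, Nontrivial (K (e n)) := fun n => (e n).2
  obtain ⟨eCantor⟩ := nonempty_pi_homeomorph_cantor_of_nontrivial fun n => K (e n)
  have : ∀ i : {i // ¬Nontrivial (K i)}, Subsingleton (K i) :=
    fun i => not_nontrivial_iff_subsingleton.1 i.2
  have : Unique (∀ i : {i // ¬Nontrivial (K i)}, K i) :=
    uniqueOfSubsingleton (Classical.arbitrary _)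
  exact ⟨(Homeomorph.piEquivPiSubtypeProd _ K).trans <| (Homeomorph.prodUnique _ _).trans <|
    ((Homeomorph.piCongrLeft e).symm).trans eCantor⟩

theorem infinite_setOf_nontrivial_ker {G : ℕ → Type*} [∀ n, AddCommGroup (G n)]
    {f : ∀ n, G (n + 1) →+ G n} (hsurj : ∀ n, Function.Surjective (f n))
    (hns : ∀ N : ℕ, ∃ m, N ≤ m ∧ ¬Function.Bijective (f m)) :
    {n | Nontrivial (f n).ker}.Infinite :=
  Nat.frequently_atTop_iff_infinite.1 <| Filter.frequently_atTop.2 fun N =>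
    (hns N).imp fun m ⟨hNm, hm⟩ => ⟨hNm, (AddSubgroup.nontrivial_iff_ne_bot _).2 fun hbot =>
      hm ⟨(AddMonoidHom.ker_eq_bot_iff _).1 hbot, hsurj m⟩⟩

section InverseLimit

variable {G : ℕ → Type*} [∀ n, AddCommGroup (G n)] {f : ∀ n, G (n + 1) →+ G n}
  (hf : ∀ n, Function.Surjective (f n))

noncomputable def liftSeq (g : G 0) (κ : ∀ n, (f n).ker) : ∀ n, G n
  | 0 => g
  | n + 1 => Function.surjInv (hf n) (liftSeq g κ n) + κ n

theorem liftSeq_mem_invLim (g : G 0) (κ : ∀ n, (f n).ker) : liftSeq hf g κ ∈ invLim G f := by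
  intro n
  rw [liftSeq, map_add, Function.surjInv_eq (hf n), AddMonoidHom.mem_ker.1 (κ n).2, add_zero]

variable [∀ n, TopologicalSpace (G n)] [∀ n, DiscreteTopology (G n)]

theorem continuous_liftSeq (n : ℕ) :
    Continuous fun p : G 0 × ∀ n, (f n).ker => liftSeq hf p.1 p.2 n := by
  induction n with
  | zero => exact continuous_fst
  | succ n ih =>
    exact (continuous_of_discreteTopology (f := fun q : G n × (f n).ker =>
      Function.surjInv (hf n) q.1 + q.2)).comp
        (ih.prodMk ((continuous_apply n).comp continuous_snd))

noncomputable def invLimHomeomorphProdKer : invLim G f ≃ₜ G 0 × ∀ n, (f n).ker where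
  toFun x := (x.1 0, fun n => ⟨x.1 (n + 1) - Function.surjInv (hf n) (x.1 n), by
    rw [AddMonoidHom.mem_ker, map_sub, Function.surjInv_eq (hf n), ← x.2 n, sub_self]⟩)
  invFun p := ⟨liftSeq hf p.1 p.2, liftSeq_mem_invLim hf p.1 p.2⟩
  left_inv x := by
    refine Subtype.ext (funext fun n => ?_)
    dsimp only
    induction n with
    | zero => rfl
    | succ n ih => rw [liftSeq, ih, add_sub_cancel]
  right_inv p := Prod.ext rfl <| funext fun n => Subtype.ext (add_sub_cancel_left _ _)
  continuous_toFun := by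
    refine ((continuous_apply 0).comp continuous_subtype_val).prodMk <|
      continuous_pi fun n => Continuous.subtype_mk ?_ _
    have : DependsOn (fun y : ∀ n, G n => y (n + 1) - Function.surjInv (hf n) (y n)) {n, n + 1} :=
      fun y y' h => by dsimp only; rw [h (n + 1) (by simp), h n (by simp)]
    exact (this.continuous (Set.toFinite _)).comp continuous_subtype_val
  continuous_invFun := (continuous_pi (continuous_liftSeq hf)).subtype_mk _

end InverseLimit

/-- Let `(G n, f n)` be an inverse sequence of countable discrete abelian
groups indexed by `ℕ` with all bonding maps `f n : G (n+1) → G n` surjective, and suppose: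
the sequence does not stabilize, the set `{n : ker (f n) is infinite}` is finite, and at least
one kernel `ker (f n)` is infinite.  Then the inverse limit `lim G n` is homeomorphic to
`ℕ × (ℕ → Bool)`, the product of the discrete space `ℕ` with the Cantor space; in particular
`lim G n` is locally compact but not compact. -/
theorem invLim_homeomorph_nat_prod_cantor
    (G : ℕ → Type*) [∀ n, AddCommGroup (G n)] [∀ n, Countable (G n)]
    [∀ n, TopologicalSpace (G n)] [∀ n, DiscreteTopology (G n)]
    (f : ∀ n, G (n + 1) →+ G n)
    (hsurj : ∀ n, Function.Surjective (f n))
    (hns : ∀ N : ℕ, ∃ m, N ≤ m ∧ ¬Function.Bijective (f m))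
    (hfin : {n : ℕ | Infinite (f n).ker}.Finite)
    (hone : ∃ n : ℕ, Infinite (f n).ker) :
    Nonempty (invLim G f ≃ₜ ℕ × (ℕ → Bool)) ∧ LocallyCompactSpace (invLim G f) ∧
      ¬CompactSpace (invLim G f) := by
  classical
  obtain ⟨n₀, hn₀⟩ := hone
  have : Finite {n // Infinite (f n).ker} := hfin.to_subtype
  have : ∀ n : {n // ¬Infinite (f n).ker}, Finite (f n).ker :=
    fun n => not_infinite_iff_finite.1 n.2
  have : Infinite (∀ n : {n // Infinite (f n).ker}, (f n).ker) :=
    Pi.infinite_of_exists_right ⟨n₀, hn₀⟩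
  have hnontrivial : {n : {n // ¬Infinite (f n).ker} | Nontrivial (f n).ker}.Infinite := by
    refine Set.Infinite.of_image Subtype.val
      (((infinite_setOf_nontrivial_ker hsurj hns).sdiff hfin).mono ?_)
    rintro n ⟨hn, hfinite⟩
    exact ⟨⟨n, hfinite⟩, hn, rfl⟩
  obtain ⟨eNat⟩ : Nonempty ((G 0 × ∀ n : {n // Infinite (f n).ker}, (f n).ker) ≃ₜ ℕ) :=
    nonempty_equiv_of_countable.map Equiv.toHomeomorphOfDiscrete
  obtain ⟨eCantor⟩ :=
    nonempty_pi_homeomorph_cantor (fun n : {n // ¬Infinite (f n).ker} => (f n).ker) hnontrivial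
  let e : invLim G f ≃ₜ ℕ × (ℕ → Bool) :=
    (invLimHomeomorphProdKer hsurj).trans <|
      ((Homeomorph.refl _).prodCongr (Homeomorph.piEquivPiSubtypeProd _ _)).trans <|
        (Homeomorph.prodAssoc _ _ _).symm.trans (eNat.prodCongr eCantor)
  exact ⟨⟨e⟩, e.locallyCompactSpace_iff.2 inferInstance,
    fun _ => (not_compactSpace_iff (X := ℕ × (ℕ → Bool))).2 inferInstance e.compactSpace⟩
end
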